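/- For n ≥ 3, the group SL(n,ℤ) is perfect, i.e., equal to its commutator subgroup. -/

import Mathlib

/-!
Elementary transvections `e_ij(c) = 1 + c • E_ij` are commutators as soon as there is a third
index `k`, since `⁅e_ik(c), e_kj(1)⁆ = e_ij(c)`. So it suffices that they generate `SL(n, ℤ)`,
i.e. that every `A ∈ SL(n, ℤ)` row-reduces to the identity, one column `κ` at a time. Euclid's
algorithm on the entries of column `κ` in the rows not yet reduced leaves a single nonzero one,
which is a unit because `(A⁻¹ * A) κ κ = 1`; one or two more row operations with a second free
row turn it into a `1` at `(κ, κ)`, which then clears the rest of the column. If `κ` is the last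
free index there is no second free row, but then `A κ κ = det A = 1` already.
-/

open Matrix Finset

namespace Matrix.SpecialLinearGroup

variable {ι R : Type*} [Fintype ι] [DecidableEq ι] [CommRing R]

open scoped commutatorElement in
theorem commutatorElement_transvection_transvection {i j k : ι} (hik : i ≠ k) (hkj : k ≠ j)
    (hij : i ≠ j) (c : R) :
    ⁅transvection hik c, transvection hkj 1⁆ = transvection hij c := by
  rw [commutatorElement_def, transvection_inv, transvection_inv]
  refine Subtype.ext ?_
  simp only [coe_mul, transvection_coe, mul_add, add_mul, one_mul, mul_one,
    single_mul_single_same, single_mul_single_of_ne _ _ _ _ hkj.symm,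
    single_mul_single_of_ne _ _ _ _ hik.symm, single_mul_single_of_ne _ _ _ _ hij.symm,
    mul_neg]
  simp only [← single_neg, neg_neg, zero_mul, add_zero]
  abel

variable (ι R) in
def elementarySubgroup : Subgroup (SpecialLinearGroup ι R) :=
  Subgroup.closure {A | ∃ (i j : ι) (hij : i ≠ j) (c : R), transvection hij c = A}

theorem transvection_mem_elementarySubgroup {i j : ι} (hij : i ≠ j) (c : R) :
    transvection hij c ∈ elementarySubgroup ι R :=
  Subgroup.subset_closure ⟨i, j, hij, c, rfl⟩

theorem elementarySubgroup_le_commutator (hι : 3 ≤ Fintype.card ι) :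
    elementarySubgroup ι R ≤ commutator (SpecialLinearGroup ι R) := by
  refine (Subgroup.closure_le _).2 ?_
  rintro _ ⟨i, j, hij, c, rfl⟩
  obtain ⟨k, hk, hkj⟩ : ∃ k ∈ univ.erase i, k ≠ j :=
    exists_mem_ne (by rw [card_erase_of_mem (mem_univ i), card_univ]; omega) j
  rw [← commutatorElement_transvection_transvection (ne_of_mem_erase hk).symm hkj hij c,
    commutator_def]
  exact Subgroup.commutator_mem_commutator (Subgroup.mem_top _) (Subgroup.mem_top _)

theorem transvection_mul_apply_same {i j : ι} (hij : i ≠ j) (c : R)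
    (A : SpecialLinearGroup ι R) (m : ι) :
    (transvection hij c * A) i m = A i m + c * A j m :=
  Matrix.transvection_mul_apply_same i j m c A

theorem transvection_mul_apply_of_ne {i j l : ι} (hij : i ≠ j) (c : R)
    (A : SpecialLinearGroup ι R) (hl : l ≠ i) (m : ι) :
    (transvection hij c * A) l m = A l m :=
  Matrix.transvection_mul_apply_of_ne i j l m hl c A

theorem exists_transvection_mul_apply_eq_one {i j : ι} (hij : i ≠ j) (A : SpecialLinearGroup ι R)
    {m : ι} (hu : IsUnit (A j m)) : ∃ c : R, (transvection hij c * A) i m = 1 :=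
  ⟨(1 - A i m) * hu.unit⁻¹, by rw [transvection_mul_apply_same, mul_assoc, hu.val_inv_mul]; ring⟩

def FixesBasisOn (s : Finset ι) (A : SpecialLinearGroup ι R) : Prop :=
  ∀ j ∈ s, ∀ i, A i j = (1 : Matrix ι ι R) i j

namespace FixesBasisOn

variable {s : Finset ι}

section CommRing

variable {A : SpecialLinearGroup ι R}

theorem transvection_mul (hA : FixesBasisOn s A) {i j : ι} (hij : i ≠ j) (hj : j ∉ s) (c : R) :
    FixesBasisOn s (transvection hij c * A) := by
  intro m hm l
  rcases eq_or_ne l i with rfl | hli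
  · rw [transvection_mul_apply_same, hA m hm, hA m hm j,
      one_apply_ne (ne_of_mem_of_not_mem hm hj).symm, mul_zero, add_zero]
  · rw [transvection_mul_apply_of_ne _ _ _ hli, hA m hm]

theorem inv (hA : FixesBasisOn s A) : FixesBasisOn s A⁻¹ := by
  intro j hj l
  have h : (A⁻¹ * A) l j = A⁻¹ l j := by
    simp only [coe_mul, mul_apply, hA j hj, one_apply, mul_ite, mul_one, mul_zero,
      sum_ite_eq', mem_univ, if_true]
  rw [← h, inv_mul_cancel, coe_one]

/-- The entries of column `κ` in the rows outside `s` generate the unit ideal. -/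
theorem sum_inv_apply_mul_apply (hA : FixesBasisOn s A) {κ : ι} (hκ : κ ∉ s) :
    ∑ i ∈ sᶜ, A⁻¹ κ i * A i κ = 1 := by
  have h := congr_fun₂ (congr_arg Subtype.val (inv_mul_cancel A)) κ κ
  rw [coe_mul, mul_apply, ← sum_add_sum_compl s, sum_eq_zero, zero_add] at h
  · simpa using h
  intro i hi
  rw [hA.inv i hi, one_apply_ne (ne_of_mem_of_not_mem hi hκ).symm, zero_mul]

/-- `A` is the identity with column `κ` replaced, so `A κ κ = det A`. -/
theorem apply_self_eq_one (hA : FixesBasisOn s A) {κ : ι} (hs : ∀ j ∉ s, j = κ) :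
    A κ κ = 1 := by
  have hcol : (A : Matrix ι ι R) =
      updateCol 1 κ fun i ↦ ∑ l, A l κ • (1 : Matrix ι ι R) i l := by
    ext i j
    rcases eq_or_ne j κ with rfl | hjκ
    · simp [one_apply]
    · rw [updateCol_ne hjκ, hA j (by_contra fun hj ↦ hjκ (hs j hj)) i]
  have h := A.2
  rwa [hcol, det_updateCol_sum, det_one, smul_eq_mul, mul_one] at h

theorem exists_mul_insert_of_apply_self_eq_one (hA : FixesBasisOn s A) {κ : ι} (hκ : κ ∉ s)
    (h1 : A κ κ = 1) :
    ∃ B ∈ elementarySubgroup ι R, FixesBasisOn (insert κ s) (B * A) := by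
  suffices key : ∀ (t : Finset ι) (A : SpecialLinearGroup ι R), FixesBasisOn s A → A κ κ = 1 →
      (∀ i ∉ t, i ≠ κ → A i κ = 0) →
        ∃ B ∈ elementarySubgroup ι R, FixesBasisOn (insert κ s) (B * A) from
    key univ A hA h1 fun i hi ↦ absurd (mem_univ i) hi
  intro t
  induction t using Finset.induction_on with
  | empty =>
    intro A hA h1 h0
    refine ⟨1, one_mem _, fun j hj i ↦ ?_⟩
    rw [one_mul]
    rcases mem_insert.1 hj with rfl | hj
    · rcases eq_or_ne i j with rfl | hij
      · rw [h1, one_apply_eq]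
      · rw [h0 i (notMem_empty i) hij, one_apply_ne hij]
    · exact hA j hj i
  | insert a t _ ih =>
    intro A hA h1 h0
    rcases eq_or_ne a κ with rfl | haκ
    · exact ih A hA h1 fun i hi hiκ ↦ h0 i (by simp [hi, hiκ]) hiκ
    obtain ⟨B, hB, hBA⟩ := ih (transvection haκ (-A a κ) * A) (hA.transvection_mul haκ hκ _)
      (by rw [transvection_mul_apply_of_ne _ _ _ haκ.symm, h1]) fun i hi hiκ ↦ by
        rcases eq_or_ne i a with rfl | hia
        · rw [transvection_mul_apply_same, h1]; ring
        · rw [transvection_mul_apply_of_ne _ _ _ hia, h0 i (by simp [hi, hia]) hiκ]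
    exact ⟨B * transvection haκ (-A a κ), mul_mem hB (transvection_mem_elementarySubgroup _ _),
      by rwa [mul_assoc]⟩

end CommRing

section Int

variable {A : SpecialLinearGroup ι ℤ}

theorem exists_mul_apply_eq_zero_of_ne (hA : FixesBasisOn s A) (κ : ι) :
    ∃ B ∈ elementarySubgroup ι ℤ, FixesBasisOn s (B * A) ∧
      ∀ i ∉ s, ∀ j ∉ s, (B * A) i κ ≠ 0 → (B * A) j κ ≠ 0 → i = j := by
  induction hm : ∑ i ∈ sᶜ, (A i κ).natAbs using Nat.strong_induction_on generalizing A with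
  | _ m ih =>
  by_cases hred : ∃ i ∉ s, ∃ j ∉ s, ∃ hij : i ≠ j,
      A j κ ≠ 0 ∧ (A j κ).natAbs ≤ (A i κ).natAbs
  · obtain ⟨i, hi, j, hj, hij, hj0, hle⟩ := hred
    set t := transvection hij (-(A i κ / A j κ))
    have hti : ((t * A) i κ).natAbs < (A i κ).natAbs := by
      have hrem : (t * A) i κ = A i κ % A j κ := by
        rw [transvection_mul_apply_same, Int.emod_def]
        ring
      have := Int.emod_lt (A i κ) hj0
      have := Int.emod_nonneg (A i κ) hj0
      omega
    have hlt : ∑ l ∈ sᶜ, ((t * A) l κ).natAbs < m := by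
      refine hm ▸ sum_lt_sum (fun l _ ↦ ?_) ⟨i, mem_compl.2 hi, ?_⟩
      · rcases eq_or_ne l i with rfl | hli
        · exact hti.le
        · rw [transvection_mul_apply_of_ne _ _ _ hli]
      · exact hti
    obtain ⟨B, hB, hBA, hsupp⟩ := ih _ hlt (hA.transvection_mul hij hj _) rfl
    refine ⟨B * t, mul_mem hB (transvection_mem_elementarySubgroup _ _), ?_⟩
    rw [mul_assoc]
    exact ⟨hBA, hsupp⟩
  · push Not at hred
    refine ⟨1, one_mem _, by rwa [one_mul], fun i hi j hj hi0 hj0 ↦ ?_⟩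
    rw [one_mul] at hi0 hj0
    by_contra hij
    have := hred i hi j hj hij hj0
    have := hred j hj i hi (Ne.symm hij) hi0
    omega

theorem exists_mul_isUnit_apply (hA : FixesBasisOn s A) {κ : ι} (hκ : κ ∉ s) :
    ∃ B ∈ elementarySubgroup ι ℤ, FixesBasisOn s (B * A) ∧ ∃ i ∉ s, IsUnit ((B * A) i κ) := by
  obtain ⟨B, hB, hBA, hsupp⟩ := hA.exists_mul_apply_eq_zero_of_ne κ
  have hsum := hBA.sum_inv_apply_mul_apply hκ
  obtain ⟨i, hi, hi0⟩ := exists_ne_zero_of_sum_ne_zero (hsum ▸ one_ne_zero)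
  have hi0 : (B * A) i κ ≠ 0 := right_ne_zero_of_mul hi0
  rw [sum_eq_single_of_mem i hi fun j hj hji ↦ ?_] at hsum
  · exact ⟨B, hB, hBA, i, mem_compl.1 hi, IsUnit.of_mul_eq_one_right _ hsum⟩
  by_contra h
  exact hji (hsupp j (mem_compl.1 hj) i (mem_compl.1 hi) (right_ne_zero_of_mul h) hi0)

theorem exists_mul_insert (hA : FixesBasisOn s A) {κ : ι} (hκ : κ ∉ s) :
    ∃ B ∈ elementarySubgroup ι ℤ, FixesBasisOn (insert κ s) (B * A) := by
  suffices ∃ B ∈ elementarySubgroup ι ℤ, FixesBasisOn s (B * A) ∧ (B * A) κ κ = 1 by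
    obtain ⟨B, hB, hBA, h1⟩ := this
    obtain ⟨C, hC, hCBA⟩ := hBA.exists_mul_insert_of_apply_self_eq_one hκ h1
    exact ⟨C * B, mul_mem hC hB, by rwa [mul_assoc]⟩
  by_cases hs : ∀ j ∉ s, j = κ
  · exact ⟨1, one_mem _, by rwa [one_mul], by rw [one_mul]; exact hA.apply_self_eq_one hs⟩
  push Not at hs
  obtain ⟨j, hj, hjκ⟩ := hs
  obtain ⟨B, hB, hBA, i, hi, hu⟩ := hA.exists_mul_isUnit_apply hκ
  -- A unit can only produce a `1` in another row, so a diagonal one is first moved to row `j`.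
  obtain ⟨C, hC, hCBA, i', hi', hi'κ, hu'⟩ : ∃ C ∈ elementarySubgroup ι ℤ,
      FixesBasisOn s (C * (B * A)) ∧ ∃ i' ∉ s, i' ≠ κ ∧ IsUnit ((C * (B * A)) i' κ) := by
    rcases eq_or_ne i κ with rfl | hiκ
    · obtain ⟨c, hc⟩ := exists_transvection_mul_apply_eq_one hjκ (B * A) hu
      exact ⟨transvection hjκ c, transvection_mem_elementarySubgroup _ _,
        hBA.transvection_mul hjκ hi c, j, hj, hjκ, by rw [hc]; exact isUnit_one⟩
    · exact ⟨1, one_mem _, by rwa [one_mul], i, hi, hiκ, by rwa [one_mul]⟩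
  obtain ⟨c, hc⟩ := exists_transvection_mul_apply_eq_one hi'κ.symm (C * (B * A)) hu'
  refine ⟨transvection hi'κ.symm c * C * B,
    mul_mem (mul_mem (transvection_mem_elementarySubgroup _ _) hC) hB, ?_, ?_⟩
  · simpa only [mul_assoc] using hCBA.transvection_mul hi'κ.symm hi' c
  · simpa only [mul_assoc] using hc

end Int

end FixesBasisOn

theorem elementarySubgroup_int_eq_top : elementarySubgroup ι ℤ = ⊤ := by
  suffices key : ∀ (t : Finset ι) (A : SpecialLinearGroup ι ℤ), FixesBasisOn tᶜ A →
      A ∈ elementarySubgroup ι ℤ from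
    eq_top_iff.2 fun A _ ↦ key univ A fun j hj ↦ absurd hj (by simp)
  intro t
  induction t using Finset.induction_on with
  | empty =>
    intro A hA
    rw [show A = 1 from Subtype.ext <| Matrix.ext fun i j ↦ hA j (by simp) i]
    exact one_mem _
  | insert κ t hκ ih =>
    intro A hA
    obtain ⟨B, hB, hBA⟩ := hA.exists_mul_insert (κ := κ) (by simp)
    rw [insert_compl_insert hκ] at hBA
    exact (Subgroup.mul_mem_cancel_left _ hB).1 (ih _ hBA)

end Matrix.SpecialLinearGroup

/-- For n ≥ 3, SL(n,ℤ) is perfect. -/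
theorem stmt_5 (n : ℕ) (hn : 3 ≤ n) :
    commutator (Matrix.SpecialLinearGroup (Fin n) ℤ) = ⊤ :=
  eq_top_iff.2 <| SpecialLinearGroup.elementarySubgroup_int_eq_top.ge.trans <|
    SpecialLinearGroup.elementarySubgroup_le_commutator (by simpa using hn)
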